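/- For r ≥ 1, the sum over k = 1, …, 2^{r−1} − 1 of the tropical angles ∠^c C(λ_{k−1}) C(λ_k) C(λ_{k+1}), where λ_k = 4k/2^r and C(λ_k) ∈ ℝ^{3} is the vector (u_r(λ_k), z_r(λ_k), z'_r(λ_k)) of the tropical staircase construction, equals (2^{r−1} − 1)·(π/2); i.e., at each interior λ_k consecutive points have strictly increasing maxima, attained on disjoint argmax sets (z_r for k even, z'_r for k odd). -/

import Mathlib

/-!
With `d_i = v_i - u_i`, the identities `min + max = u_i + v_i` and `max - min = |d_i|` turn the
recursion into `u_i + v_i = u_0 + v_0 + 2i - 1 + 2^{-i}` and `2^{i+1} d_{i+1} = 2 |2^i d_i| - 1`,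
so `2^i d_i` is the `i`-th iterate of the tent map `x ↦ 2|x| - 1` at `d_0 = λ - 1`. One step of
this map sends the dyadic point `1 - 2m/2^{i+1}` to `1 - 2m'/2^i` with `m' ≡ m (mod 2)`, hence
its `i`-th iterate at `1 - 2m/2^i` is `(-1)^m`. So at `λ_k` the point `C(λ_k)` is `(a, a, b)` or
`(a, b, a)` according to the parity of `k`, with `b = r + (2k+2)/2^r`: the maxima increase
strictly and the argmax alternates between `z_r` and `z'_r`, so every angle is `π/2`.
-/

open scoped Classical

/-- The maximal coordinate of a vector in `ℝ³`. -/
noncomputable def maxCoord (U : Fin 3 → ℝ) : ℝ :=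
  Finset.univ.sup' Finset.univ_nonempty U

/-- The tropical angle `∠ᶜ U V W`: equal to `π/2` if `max U < max V < max W` and the
argmax sets of `V` and `W` are disjoint, and `0` otherwise. -/
noncomputable def tropAngle (U V W : Fin 3 → ℝ) : ℝ :=
  if maxCoord U < maxCoord V ∧ maxCoord V < maxCoord W ∧
      ∀ i, ¬(V i = maxCoord V ∧ W i = maxCoord W)
  then Real.pi / 2 else 0

def tent (x : ℝ) : ℝ := 2 * |x| - 1

theorem tent_neg (x : ℝ) : tent (-x) = tent x := by
  simp only [tent, abs_neg]

theorem tent_iterate_dyadic {i m : ℕ} (hm : m ≤ 2 ^ i) :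
    tent^[i] (1 - 2 * m / 2 ^ i) = (-1) ^ m := by
  induction i generalizing m with
  | zero =>
    interval_cases m <;> norm_num
  | succ i ih =>
    rw [Function.iterate_succ_apply]
    rcases le_total m (2 ^ i) with h | h
    · have hm' : (m : ℝ) ≤ 2 ^ i := by exact_mod_cast h
      have : tent (1 - 2 * m / 2 ^ (i + 1)) = 1 - 2 * m / 2 ^ i := by
        rw [tent, abs_of_nonneg]
        · field_simp; ring
        · rw [pow_succ, sub_nonneg, div_le_one (by positivity)]; linarith
      rw [this, ih h]
    · obtain ⟨k, hk⟩ : ∃ k, k + m = 2 ^ (i + 1) := ⟨2 ^ (i + 1) - m, by omega⟩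
      have hk' : (k : ℝ) + m = 2 ^ (i + 1) := by exact_mod_cast hk
      have hm' : (2 : ℝ) ^ i ≤ m := by exact_mod_cast h
      have : tent (1 - 2 * m / 2 ^ (i + 1)) = 1 - 2 * k / 2 ^ i := by
        rw [tent, abs_of_nonpos]
        · rw [show (k : ℝ) = 2 ^ (i + 1) - m by linarith]; field_simp; ring
        · rw [pow_succ, sub_nonpos, le_div_iff₀ (by positivity)]; linarith
      rw [pow_succ] at hk
      have hpar : k % 2 = m % 2 := by omega
      rw [this, ih (by omega), neg_one_pow_eq_pow_mod_two, hpar,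
        ← neg_one_pow_eq_pow_mod_two]

section Staircase

variable {u v : ℕ → ℝ}

theorem staircase_add_eq (hu : ∀ i, u (i + 1) = 1 + min (u i) (v i))
    (hv : ∀ i, v (i + 1) = 1 - 1 / 2 ^ (i + 1) + max (u i) (v i)) (i : ℕ) :
    u i + v i = u 0 + v 0 + 2 * i - 1 + 1 / 2 ^ i := by
  induction i with
  | zero => simp
  | succ i ih =>
    rw [hu, hv, add_add_add_comm, min_add_max]
    push_cast
    rw [pow_succ]
    linear_combination ih

theorem staircase_sub_eq (hu : ∀ i, u (i + 1) = 1 + min (u i) (v i))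
    (hv : ∀ i, v (i + 1) = 1 - 1 / 2 ^ (i + 1) + max (u i) (v i)) (i : ℕ) :
    v i - u i = tent^[i] (v 0 - u 0) / 2 ^ i := by
  induction i with
  | zero => simp
  | succ i ih =>
    have hgap : max (u i) (v i) - min (u i) (v i) = |tent^[i] (v 0 - u 0)| / 2 ^ i := by
      rw [max_sub_min_eq_abs, ih, abs_div, abs_of_pos (by positivity : (0 : ℝ) < 2 ^ i)]
    rw [hu, hv, Function.iterate_succ_apply', tent, pow_succ]
    linear_combination hgap

end Staircase

theorem staircase_dyadic {u v : ℕ → ℝ → ℝ} (hu0 : ∀ l : ℝ, u 0 l = 1)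
    (hv0 : ∀ l : ℝ, v 0 l = min 2 l)
    (hu : ∀ (i : ℕ) (l : ℝ), u (i + 1) l = 1 + min (u i l) (v i l))
    (hv : ∀ (i : ℕ) (l : ℝ), v (i + 1) l = 1 - 1 / 2 ^ (i + 1) + max (u i l) (v i l))
    {n j : ℕ} (hj : j ≤ 2 ^ (n + 1)) :
    max (u (n + 1) (j / 2 ^ n)) (v (n + 1) (j / 2 ^ n)) = n + 1 + (j + 1) / 2 ^ (n + 1) ∧
      v (n + 1) (j / 2 ^ n) - u (n + 1) (j / 2 ^ n) = (-1) ^ j / 2 ^ (n + 1) := by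
  set l : ℝ := j / 2 ^ n
  have hl : l ≤ 2 := by
    rw [div_le_iff₀ (by positivity), ← pow_succ']; exact_mod_cast hj
  have hsum := staircase_add_eq
    (u := fun i => u i l) (v := fun i => v i l) (hu · l) (hv · l) (n + 1)
  have hgap := staircase_sub_eq
    (u := fun i => u i l) (v := fun i => v i l) (hu · l) (hv · l) (n + 1)
  simp only [hu0, hv0, min_eq_right hl] at hsum hgap
  -- `tent` is even, so the start `λ - 1` may be reflected onto the grid `1 - 2m/2^(n+1)`.
  have hstart : l - 1 = -(1 - 2 * j / 2 ^ (n + 1)) := by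
    simp only [l, pow_succ]; field_simp; ring
  rw [hstart, Function.iterate_succ_apply, tent_neg, ← Function.iterate_succ_apply,
    tent_iterate_dyadic hj] at hgap
  refine ⟨?_, hgap⟩
  have hmax : max (u (n + 1) l) (v (n + 1) l) =
      (u (n + 1) l + v (n + 1) l + |v (n + 1) l - u (n + 1) l|) / 2 := by
    linear_combination (min_add_max (u (n + 1) l) (v (n + 1) l) +
      max_sub_min_eq_abs (u (n + 1) l) (v (n + 1) l)) / 2
  rw [hmax, hsum, hgap, abs_div, abs_neg_one_pow,
    abs_of_pos (by positivity : (0 : ℝ) < 2 ^ (n + 1))]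
  simp only [l, pow_succ]
  push_cast
  field_simp
  ring

theorem maxCoord_vecCons (a b c : ℝ) : maxCoord ![a, b, c] = max a (max b c) := by
  simp [maxCoord, Fin.univ_succ, Finset.sup'_insert]

theorem maxCoord_staircase (x y : ℝ) : maxCoord ![1 + min x y, 1 + x, 1 + y] = 1 + max x y := by
  rw [maxCoord_vecCons, max_add_add_left, max_add_add_left, max_eq_right min_le_max]

theorem tropAngle_staircase {x₀ y₀ x₁ y₁ x₂ y₂ : ℝ} (h₀₁ : max x₀ y₀ < max x₁ y₁)
    (h₁₂ : max x₁ y₁ < max x₂ y₂) (hflip : (y₁ - x₁) * (y₂ - x₂) < 0) :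
    tropAngle ![1 + min x₀ y₀, 1 + x₀, 1 + y₀] ![1 + min x₁ y₁, 1 + x₁, 1 + y₁]
      ![1 + min x₂ y₂, 1 + x₂, 1 + y₂] = Real.pi / 2 := by
  rw [tropAngle, if_pos]
  simp only [maxCoord_staircase, add_lt_add_iff_left]
  refine ⟨h₀₁, h₁₂, fun i ⟨hV, hW⟩ => ?_⟩
  fin_cases i <;> simp at hV hW <;> nlinarith

theorem sum_trop_angles_general (r : ℕ) (u v z z' : ℕ → ℝ → ℝ)
    (hu0 : ∀ l : ℝ, u 0 l = 1) (hv0 : ∀ l : ℝ, v 0 l = min 2 l)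
    (hu : ∀ (i : ℕ) (l : ℝ), u (i + 1) l = 1 + min (u i l) (v i l))
    (hv : ∀ (i : ℕ) (l : ℝ), v (i + 1) l = 1 - 1 / 2 ^ (i + 1) + max (u i l) (v i l))
    (hz : ∀ l : ℝ, z r l = 1 + u (r - 1) l)
    (hz' : ∀ l : ℝ, z' r l = 1 + v (r - 1) l) :
    ∑ k ∈ Finset.Ico (1 : ℕ) (2 ^ (r - 1)),
      tropAngle
        ![u r (4 * ((k : ℝ) - 1) / 2 ^ r), z r (4 * ((k : ℝ) - 1) / 2 ^ r),
          z' r (4 * ((k : ℝ) - 1) / 2 ^ r)]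
        ![u r (4 * (k : ℝ) / 2 ^ r), z r (4 * (k : ℝ) / 2 ^ r),
          z' r (4 * (k : ℝ) / 2 ^ r)]
        ![u r (4 * ((k : ℝ) + 1) / 2 ^ r), z r (4 * ((k : ℝ) + 1) / 2 ^ r),
          z' r (4 * ((k : ℝ) + 1) / 2 ^ r)]
      = ((2 ^ (r - 1) : ℝ) - 1) * (Real.pi / 2) := by
  calc _ = ∑ k ∈ Finset.Ico (1 : ℕ) (2 ^ (r - 1)), Real.pi / 2 :=
        Finset.sum_congr rfl fun k hk => ?_
    _ = _ := by simp [Nat.cast_sub Nat.one_le_two_pow]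
  obtain ⟨hk1, hk2⟩ := Finset.mem_Ico.mp hk
  obtain ⟨n, rfl⟩ : ∃ n, r = n + 2 := by
    have := Nat.one_lt_two_pow_iff.mp (hk1.trans_lt hk2)
    exact ⟨r - 2, by omega⟩
  have hpt (x : ℝ) : 4 * x / 2 ^ (n + 2) = x / 2 ^ n := by ring
  have hpred : (k : ℝ) - 1 = ((k - 1 : ℕ) : ℝ) := (Nat.cast_pred hk1).symm
  have hsucc : (k : ℝ) + 1 = ((k + 1 : ℕ) : ℝ) := (Nat.cast_succ k).symm
  rw [show n + 2 - 1 = n + 1 from rfl] at hz hz' hk2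
  simp only [hz, hz', hu (n + 1), hpt, hpred, hsucc]
  obtain ⟨hmax₀, -⟩ := staircase_dyadic hu0 hv0 hu hv (n := n) (j := k - 1) (by omega)
  obtain ⟨hmax₁, hgap₁⟩ := staircase_dyadic hu0 hv0 hu hv (n := n) (j := k) (by omega)
  obtain ⟨hmax₂, hgap₂⟩ := staircase_dyadic hu0 hv0 hu hv (n := n) (j := k + 1) (by omega)
  refine tropAngle_staircase ?_ ?_ ?_
  · rw [hmax₀, hmax₁]; gcongr; exact_mod_cast Nat.sub_lt hk1 one_pos
  · rw [hmax₁, hmax₂]; gcongr; exact_mod_cast k.lt_succ_self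
  · rw [hgap₁, hgap₂, div_mul_div_comm, ← pow_add, Odd.neg_one_pow ⟨k, by ring⟩]
    exact div_neg_of_neg_of_pos (by norm_num) (by positivity)

/-- The sum of the tropical angles along the points `C(λ_k) = (u_r(λ_k), z_r(λ_k), z'_r(λ_k))`
of the tropical staircase at `λ_k = 4k/2^r`, `k = 1, …, 2^{r-1} - 1`, equals
`(2^{r-1} - 1)·(π/2)`. -/
theorem sum_trop_angles (r : ℕ) (hr : 1 ≤ r) (u v z z' : ℕ → ℝ → ℝ)
    (hu0 : ∀ l : ℝ, u 0 l = 1) (hv0 : ∀ l : ℝ, v 0 l = min 2 l)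
    (hu : ∀ (i : ℕ) (l : ℝ), u (i + 1) l = 1 + min (u i l) (v i l))
    (hv : ∀ (i : ℕ) (l : ℝ), v (i + 1) l = 1 - 1 / 2 ^ (i + 1) + max (u i l) (v i l))
    (hz : ∀ l : ℝ, z r l = 1 + u (r - 1) l)
    (hz' : ∀ l : ℝ, z' r l = 1 + v (r - 1) l) :
    ∑ k ∈ Finset.Ico (1 : ℕ) (2 ^ (r - 1)),
      tropAngle
        ![u r (4 * ((k : ℝ) - 1) / 2 ^ r), z r (4 * ((k : ℝ) - 1) / 2 ^ r),
          z' r (4 * ((k : ℝ) - 1) / 2 ^ r)]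
        ![u r (4 * (k : ℝ) / 2 ^ r), z r (4 * (k : ℝ) / 2 ^ r),
          z' r (4 * (k : ℝ) / 2 ^ r)]
        ![u r (4 * ((k : ℝ) + 1) / 2 ^ r), z r (4 * ((k : ℝ) + 1) / 2 ^ r),
          z' r (4 * ((k : ℝ) + 1) / 2 ^ r)]
      = ((2 ^ (r - 1) : ℝ) - 1) * (Real.pi / 2) :=
  sum_trop_angles_general r u v z z' hu0 hv0 hu hv hz hz'
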